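/- Let V₁, V₂ and W be finite-dimensional real vector spaces, let ⟨,⟩ be a nondegenerate symmetric bilinear form on W, and let φ: V₁ × V₂ → W be a bilinear map that is flat with respect to ⟨,⟩. If X ∈ RE(φ) and N(X) = ker φ_X, then span{φ(Z,Y) : Z ∈ V₁, Y ∈ N(X)} ⊆ φ_X(V₂) ∩ φ_X(V₂)^⊥. -/

import Mathlib

open Module LinearMap

/-!
A regular element `X` maximises `dim φ_X(V₂)`, so for every `Z` and `t` the map
`φ_{X + tZ} = φ_X + t φ_Z` has rank at most that of `φ_X`. If `Y ∈ ker φ_X` but `φ_Z Y ∉ φ_X(V₂)`,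
pick `Y₁, …, Y_κ` whose images form a basis of `φ_X(V₂)`; then `φ_X Y₁, …, φ_X Y_κ, φ_Z Y` are
linearly independent. Linear independence is an open condition, so for some small `t ≠ 0` the
perturbed vectors `φ_{X + tZ} Yᵢ` and `φ_{X + tZ}(t⁻¹ Y) = φ_Z Y` are still independent, and
`φ_{X + tZ}` would have rank `κ + 1`. Orthogonality to `φ_X(V₂)` is flatness with `φ_X Y = 0`.
-/

open Filter Topology in
theorem LinearIndependent.exists_ne_zero_add_smul {ι W : Type*} [Finite ι]
    [AddCommGroup W] [Module ℝ W] [FiniteDimensional ℝ W] {f : ι → W} (hf : LinearIndependent ℝ f)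
    (g : ι → W) : ∃ t : ℝ, t ≠ 0 ∧ LinearIndependent ℝ (f + t • g) := by
  let e := (Module.finBasis ℝ W).equivFun
  have hpath : Tendsto (fun t : ℝ => e ∘ f + t • (e ∘ g)) (𝓝[≠] 0) (𝓝 (e ∘ f)) := by
    have hcont : Continuous fun t : ℝ => e ∘ f + t • (e ∘ g) := by fun_prop
    simpa using (hcont.tendsto 0).mono_left nhdsWithin_le_nhds
  obtain ⟨t, hind, ht⟩ :=
    ((hpath.eventually (hf.map' _ e.ker).eventually).and self_mem_nhdsWithin).exists
  have hcomp : e.toLinearMap ∘ (f + t • g) = e ∘ f + t • (e ∘ g) := by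
    ext i : 1
    simp
  exact ⟨t, ht, LinearIndependent.of_comp e.toLinearMap (hcomp ▸ hind)⟩

namespace LinearMap

theorem exists_finrank_range_lt_finrank_range_add_smul {V W : Type*}
    [AddCommGroup V] [Module ℝ V] [AddCommGroup W] [Module ℝ W] [FiniteDimensional ℝ W]
    {A C : V →ₗ[ℝ] W} {y : V} (hy : A y = 0) (hCy : C y ∉ range A) :
    ∃ t : ℝ, finrank ℝ (range A) < finrank ℝ (range (A + t • C)) := by
  let b := Module.finBasis ℝ (range A)
  choose u hu using fun i => mem_range.mp (b i).2
  let f : Fin (finrank ℝ (range A) + 1) → W := Fin.snoc (fun i => A (u i)) (C y)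
  let g : Fin (finrank ℝ (range A) + 1) → W := Fin.snoc (fun i => C (u i)) 0
  have hspan : Submodule.span ℝ (Set.range fun i => A (u i)) ≤ range A :=
    Submodule.span_le.mpr (Set.range_subset_iff.mpr fun i => mem_range_self A (u i))
  have hf : LinearIndependent ℝ f := by
    refine linearIndependent_finSnoc.mpr ⟨?_, fun h => hCy (hspan h)⟩
    simp only [hu]
    exact b.linearIndependent.map' _ (Submodule.ker_subtype _)
  obtain ⟨t, ht, hft⟩ := hf.exists_ne_zero_add_smul g
  have hmem : ∀ i, (f + t • g) i ∈ range (A + t • C) := by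
    refine Fin.lastCases ⟨t⁻¹ • y, ?_⟩ fun i => ⟨u i, ?_⟩
    · simp [f, g, hy, smul_smul, ht]
    · simp [f, g]
  let v : Fin (finrank ℝ (range A) + 1) → range (A + t • C) := fun i => ⟨_, hmem i⟩
  have hv : LinearIndependent ℝ v := LinearIndependent.of_comp (range (A + t • C)).subtype hft
  exact ⟨t, by simpa using hv.fintype_card_le_finrank⟩

section Regular

variable {V₁ V₂ W : Type*} [AddCommGroup V₁] [Module ℝ V₁] [AddCommGroup V₂] [Module ℝ V₂]
  [AddCommGroup W] [Module ℝ W]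

def IsRegularElement (φ : V₁ →ₗ[ℝ] V₂ →ₗ[ℝ] W) (X : V₁) : Prop :=
  finrank ℝ (range (φ X)) = ⨆ X' : V₁, finrank ℝ (range (φ X'))

theorem finrank_range_le_of_isRegularElement [FiniteDimensional ℝ W]
    {φ : V₁ →ₗ[ℝ] V₂ →ₗ[ℝ] W} {X : V₁} (hX : φ.IsRegularElement X) (X' : V₁) :
    finrank ℝ (range (φ X')) ≤ finrank ℝ (range (φ X)) :=
  hX ▸ le_ciSup (f := fun X' => finrank ℝ (range (φ X')))
    ⟨finrank ℝ W, Set.forall_mem_range.mpr fun _ => Submodule.finrank_le _⟩ X'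

theorem apply_mem_range_of_isRegularElement [FiniteDimensional ℝ W]
    {φ : V₁ →ₗ[ℝ] V₂ →ₗ[ℝ] W} {X : V₁} (hX : φ.IsRegularElement X) (Z : V₁) {Y : V₂}
    (hY : Y ∈ ker (φ X)) : φ Z Y ∈ range (φ X) := by
  by_contra hZY
  obtain ⟨t, ht⟩ := exists_finrank_range_lt_finrank_range_add_smul hY hZY
  have hXZ : φ X + t • φ Z = φ (X + t • Z) := by rw [map_add, map_smul]
  exact ht.not_ge (hXZ ▸ finrank_range_le_of_isRegularElement hX _)

end Regular

theorem apply_mem_orthogonal_range {R V₁ V₂ W : Type*} [CommRing R] [AddCommGroup V₁]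
    [Module R V₁] [AddCommGroup V₂] [Module R V₂] [AddCommGroup W] [Module R W]
    (B : LinearMap.BilinForm R W) (φ : V₁ →ₗ[R] V₂ →ₗ[R] W)
    (hflat : ∀ (X Z : V₁) (Y T : V₂), B (φ X Y) (φ Z T) - B (φ X T) (φ Z Y) = 0)
    {X : V₁} (Z : V₁) {Y : V₂} (hY : Y ∈ ker (φ X)) :
    φ Z Y ∈ B.orthogonal (range (φ X)) := by
  rw [BilinForm.mem_orthogonal_iff]
  rintro _ ⟨T, rfl⟩
  simpa [mem_ker.mp hY] using hflat X Z Y T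

end LinearMap

theorem stmt_3_general
    {V₁ V₂ W : Type*}
    [AddCommGroup V₁] [Module ℝ V₁]
    [AddCommGroup V₂] [Module ℝ V₂]
    [AddCommGroup W] [Module ℝ W] [FiniteDimensional ℝ W]
    (B : LinearMap.BilinForm ℝ W)
    (φ : V₁ →ₗ[ℝ] V₂ →ₗ[ℝ] W)
    (hflat : ∀ (X Z : V₁) (Y T : V₂), B (φ X Y) (φ Z T) - B (φ X T) (φ Z Y) = 0)
    (κ : ℕ) (hκ : κ = ⨆ X : V₁, finrank ℝ (LinearMap.range (φ X)))
    (X : V₁) (hX : finrank ℝ (LinearMap.range (φ X)) = κ) :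
    Submodule.span ℝ {w | ∃ Z : V₁, ∃ Y ∈ LinearMap.ker (φ X), φ Z Y = w} ≤
      LinearMap.range (φ X) ⊓ B.orthogonal (LinearMap.range (φ X)) := by
  have hreg : φ.IsRegularElement X := hX.trans hκ
  rw [Submodule.span_le]
  rintro _ ⟨Z, Y, hY, rfl⟩
  exact ⟨φ.apply_mem_range_of_isRegularElement hreg Z hY,
    apply_mem_orthogonal_range B φ hflat Z hY⟩

/-- Proposition (secondst): if `φ` is flat with respect to a nondegenerate symmetric bilinear
form on `W`, `X` is a regular element of `φ` and `N(X) = ker φ_X`, then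
`S(φ|_{V₁ × N(X)}) ⊆ φ_X(V₂) ∩ φ_X(V₂)^⊥`. -/
theorem stmt_3
    {V₁ V₂ W : Type*}
    [AddCommGroup V₁] [Module ℝ V₁] [FiniteDimensional ℝ V₁]
    [AddCommGroup V₂] [Module ℝ V₂] [FiniteDimensional ℝ V₂]
    [AddCommGroup W] [Module ℝ W] [FiniteDimensional ℝ W]
    (B : LinearMap.BilinForm ℝ W)
    (hBsymm : ∀ x y, B x y = B y x)
    (hBnondeg : B.Nondegenerate)
    (φ : V₁ →ₗ[ℝ] V₂ →ₗ[ℝ] W)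
    (hflat : ∀ (X Z : V₁) (Y T : V₂), B (φ X Y) (φ Z T) - B (φ X T) (φ Z Y) = 0)
    (κ : ℕ) (hκ : κ = ⨆ X : V₁, finrank ℝ (LinearMap.range (φ X)))
    (X : V₁) (hX : finrank ℝ (LinearMap.range (φ X)) = κ) :
    Submodule.span ℝ {w | ∃ Z : V₁, ∃ Y ∈ LinearMap.ker (φ X), φ Z Y = w} ≤
      LinearMap.range (φ X) ⊓ B.orthogonal (LinearMap.range (φ X)) :=
  stmt_3_general B φ hflat κ hκ X hX
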